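/- Suppose there exist p ≥ max_i p_i, states t_1,...,t_N ∈ S̃, and s ∈ S̃ such that (p_i/p) s_i + (1 − p_i/p) t_i = s for every i (a weak Helstrom family with Helstrom ratio p). Then the optimal success probability P_succ for discriminating s_1,...,s_N with priors p_1,...,p_N satisfies P_succ ≤ p. -/

import Mathlib

/-!
Each effect `eᵢ`, being affine on the convex set `S`, is a linear functional plus a constant
there; as it is bounded, the linear part is continuous on `V`, hence extends by density to a
continuous affine `Eᵢ` on the whole space. By continuity the `Eᵢ` still form an observable on
`S̃ = closure S`. Evaluating `Eᵢ` at the reference state gives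
`ρ Eᵢ(s) = pᵢ eᵢ(sᵢ) + (ρ - pᵢ) Eᵢ(tᵢ) ≥ pᵢ eᵢ(sᵢ)`, and summing over `i` bounds the success
probability by `ρ ∑ᵢ Eᵢ(s) = ρ`.
-/

/-- An affine functional on a convex subset `A` of a real vector space. -/
def IsAffineOn {E : Type*} [AddCommGroup E] [Module ℝ E] (A : Set E) (f : E → ℝ) : Prop :=
  ∀ x ∈ A, ∀ y ∈ A, ∀ l : ℝ, 0 ≤ l → l ≤ 1 →
    f (l • x + (1 - l) • y) = l * f x + (1 - l) * f y

/-- A virtual effect: a continuous affine functional on `A` with values in `[0,1]`. -/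
def IsVirtualEffect {E : Type*} [AddCommGroup E] [Module ℝ E] [TopologicalSpace E]
    (A : Set E) (f : E → ℝ) : Prop :=
  ContinuousOn f A ∧ IsAffineOn A f ∧ ∀ x ∈ A, f x ∈ Set.Icc (0 : ℝ) 1

/-- An `N`-valued observable on `A`: a tuple of effects summing to `1` on `A`. -/
def IsObservableOn {E : Type*} [AddCommGroup E] [Module ℝ E] (A : Set E) {N : ℕ}
    (e : Fin N → E → ℝ) : Prop :=
  (∀ i, IsAffineOn A (e i) ∧ ∀ x ∈ A, e i x ∈ Set.Icc (0 : ℝ) 1) ∧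
    ∀ x ∈ A, (∑ i, e i x) = 1

open Finset

theorem LinearMap.exists_comp_eq_of_ker_le {K M V W : Type*} [Field K] [AddCommGroup M]
    [Module K M] [AddCommGroup V] [Module K V] [AddCommGroup W] [Module K W]
    (T : M →ₗ[K] V) (L : M →ₗ[K] W) (h : ker T ≤ ker L) : ∃ G : V →ₗ[K] W, G ∘ₗ T = L := by
  obtain ⟨H, hH⟩ := ((ker T).liftQ T le_rfl).exists_leftInverse_of_injective
    ((ker T).ker_liftQ_eq_bot T le_rfl le_rfl)
  refine ⟨(ker T).liftQ L h ∘ₗ H, LinearMap.ext fun m => ?_⟩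
  have hm : H (T m) = (ker T).mkQ m := LinearMap.congr_fun hH ((ker T).mkQ m)
  simp [hm]

theorem Submodule.exists_continuousLinearMap_extend_of_dense {𝕜 X F : Type*} [Ring 𝕜]
    [AddCommGroup X] [Module 𝕜 X] [TopologicalSpace X] [IsTopologicalAddGroup X]
    [ContinuousConstSMul 𝕜 X] [AddCommGroup F] [Module 𝕜 F] [UniformSpace F]
    [IsUniformAddGroup F] [T0Space F] [CompleteSpace F] [ContinuousConstSMul 𝕜 F]
    {V : Submodule 𝕜 X} (hV : Dense (V : Set X)) (f : V →L[𝕜] F) :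
    ∃ φ : X →L[𝕜] F, ∀ v : V, φ v = f v := by
  let _ : UniformSpace X := IsTopologicalAddGroup.rightUniformSpace X
  have _ : IsUniformAddGroup X := isUniformAddGroup_of_addCommGroup
  have _ : IsUniformAddGroup V := inferInstanceAs (IsUniformAddGroup V.toAddSubgroup)
  exact ⟨f.extend V.subtypeL, f.extend_eq hV.denseRange_val
    isUniformEmbedding_subtype_val.isUniformInducing⟩

namespace IsAffineOn

section Algebraic

variable {X : Type*} [AddCommGroup X] [Module ℝ X] {S : Set X} {e : X → ℝ}

theorem convexOn (hS : Convex ℝ S) (he : IsAffineOn S e) : ConvexOn ℝ S e := by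
  refine ⟨hS, fun x hx y hy a b ha hb hab => ?_⟩
  obtain rfl : b = 1 - a := by linarith
  rw [he x hx y hy a ha (by linarith)]
  rfl

theorem concaveOn (hS : Convex ℝ S) (he : IsAffineOn S e) : ConcaveOn ℝ S e := by
  refine ⟨hS, fun x hx y hy a b ha hb hab => ?_⟩
  obtain rfl : b = 1 - a := by linarith
  rw [he x hx y hy a ha (by linarith)]
  rfl

theorem map_centerMass (hS : Convex ℝ S) (he : IsAffineOn S e) {ι : Type*} {t : Finset ι}
    {w : ι → ℝ} {z : ι → X} (hw₀ : ∀ i ∈ t, 0 ≤ w i) (hw₁ : 0 < ∑ i ∈ t, w i)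
    (hz : ∀ i ∈ t, z i ∈ S) : e (t.centerMass w z) = t.centerMass w (e ∘ z) :=
  le_antisymm ((he.convexOn hS).map_centerMass_le hw₀ hw₁ hz)
    ((he.concaveOn hS).le_map_centerMass hw₀ hw₁ hz)

theorem sum_mul_eq_of_sum_smul_eq (hS : Convex ℝ S) (he : IsAffineOn S e) {ι : Type*}
    {t : Finset ι} {w₁ w₂ : ι → ℝ} {z : ι → X} (hw₁ : ∀ i ∈ t, 0 ≤ w₁ i)
    (hw₂ : ∀ i ∈ t, 0 ≤ w₂ i) (hsum : ∑ i ∈ t, w₁ i = ∑ i ∈ t, w₂ i)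
    (hsmul : ∑ i ∈ t, w₁ i • z i = ∑ i ∈ t, w₂ i • z i) (hz : ∀ i ∈ t, z i ∈ S) :
    ∑ i ∈ t, w₁ i * e (z i) = ∑ i ∈ t, w₂ i * e (z i) := by
  rcases (sum_nonneg hw₁).eq_or_lt with hzero | hpos
  · have h₁ := (sum_eq_zero_iff_of_nonneg hw₁).1 hzero.symm
    have h₂ := (sum_eq_zero_iff_of_nonneg hw₂).1 (hsum ▸ hzero.symm)
    rw [sum_eq_zero fun i hi => by rw [h₁ i hi, zero_mul],
      sum_eq_zero fun i hi => by rw [h₂ i hi, zero_mul]]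
  · have hcm : t.centerMass w₁ (e ∘ z) = t.centerMass w₂ (e ∘ z) := by
      rw [← he.map_centerMass hS hw₁ hpos hz, ← he.map_centerMass hS hw₂ (hsum ▸ hpos) hz,
        centerMass, centerMass, hsum, hsmul]
    simpa [centerMass, hsum, (hsum ▸ hpos).ne'] using hcm

theorem sum_mul_eq_zero (hS : Convex ℝ S) (he : IsAffineOn S e) {ι : Type*} {t : Finset ι}
    {w : ι → ℝ} {z : ι → X} (hsum : ∑ i ∈ t, w i = 0) (hsmul : ∑ i ∈ t, w i • z i = 0)
    (hz : ∀ i ∈ t, z i ∈ S) : ∑ i ∈ t, w i * e (z i) = 0 := by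
  have hsplit : ∀ i, w i = (w i)⁺ - (w i)⁻ := fun i => (posPart_sub_negPart (w i)).symm
  have hparts := he.sum_mul_eq_of_sum_smul_eq hS (w₁ := fun i => (w i)⁺) (w₂ := fun i => (w i)⁻)
    (fun i _ => posPart_nonneg _) (fun i _ => negPart_nonneg _)
    (by rwa [← sub_eq_zero, ← sum_sub_distrib, ← sum_congr rfl fun i _ => hsplit i])
    (by rwa [← sub_eq_zero, ← sum_sub_distrib,
      ← sum_congr rfl fun i _ => by rw [← sub_smul, ← hsplit i]])
    hz
  rw [← sub_eq_zero.2 hparts, ← sum_sub_distrib]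
  exact sum_congr rfl fun i _ => by rw [← sub_mul, ← hsplit i]

theorem exists_linearMap_add_const (hS : Convex ℝ S) (he : IsAffineOn S e) :
    ∃ (g : X →ₗ[ℝ] ℝ) (c : ℝ), ∀ x ∈ S, e x = g x + c := by
  -- homogenize: `e` becomes a linear functional `G` on `X × ℝ` with `G (x, 1) = e x` on `S`
  let T : (S →₀ ℝ) →ₗ[ℝ] X × ℝ := Finsupp.linearCombination ℝ fun x => ((x : X), (1 : ℝ))
  let L : (S →₀ ℝ) →ₗ[ℝ] ℝ := Finsupp.linearCombination ℝ fun x => e x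
  have hker : LinearMap.ker T ≤ LinearMap.ker L := by
    intro l hl
    simp only [LinearMap.mem_ker, T, L, Finsupp.linearCombination_apply, Finsupp.sum,
      Prod.ext_iff, Prod.fst_sum, Prod.snd_sum, Prod.smul_fst, Prod.smul_snd, smul_eq_mul,
      mul_one, Prod.fst_zero, Prod.snd_zero] at hl ⊢
    exact he.sum_mul_eq_zero hS hl.2 hl.1 fun x _ => x.2
  obtain ⟨G, hG⟩ := T.exists_comp_eq_of_ker_le L hker
  refine ⟨G ∘ₗ LinearMap.inl ℝ X ℝ, G (0, 1), fun x hx => ?_⟩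
  have hGx := LinearMap.congr_fun hG (Finsupp.single ⟨x, hx⟩ 1)
  simp only [LinearMap.comp_apply, T, L, Finsupp.linearCombination_single, one_smul] at hGx
  rw [← hGx, LinearMap.comp_apply, LinearMap.inl_apply, ← map_add, Prod.mk_add_mk, add_zero,
    zero_add]

end Algebraic

theorem exists_continuousLinearMap_add_const {X : Type*} [AddCommGroup X]
    [Module ℝ X] [TopologicalSpace X] [IsTopologicalAddGroup X] [ContinuousSMul ℝ X]
    {S : Set X} {e : X → ℝ} (hS : Convex ℝ S) (he : IsAffineOn S e)
    (hbdd : Bornology.IsBounded (e '' S)) {V : Submodule ℝ X} (hSV : S ⊆ (V : Set X))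
    (hVdense : Dense (V : Set X))
    (hVcont : ∀ f : V →ₗ[ℝ] ℝ,
      Bornology.IsBounded (f '' (((↑) : V → X) ⁻¹' S)) → Continuous f) :
    ∃ (φ : X →L[ℝ] ℝ) (c : ℝ), ∀ x ∈ S, e x = φ x + c := by
  obtain ⟨g, c, hg⟩ := he.exists_linearMap_add_const hS
  have hgV : Bornology.IsBounded (g.domRestrict V '' (((↑) : V → X) ⁻¹' S)) := by
    refine (hbdd.vadd (-c)).subset ?_
    rintro _ ⟨v, hv, rfl⟩
    exact ⟨e v, ⟨v, hv, rfl⟩, by simp [hg v hv]⟩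
  obtain ⟨φ, hφ⟩ := V.exists_continuousLinearMap_extend_of_dense hVdense
    ⟨g.domRestrict V, hVcont _ hgV⟩
  exact ⟨φ, c, fun x hx => by rw [hg x hx, hφ ⟨x, hSV hx⟩]; rfl⟩

end IsAffineOn

theorem weak_helstrom_bound_general {X : Type*} [AddCommGroup X] [Module ℝ X]
    [TopologicalSpace X] [IsTopologicalAddGroup X] [ContinuousSMul ℝ X]
    (S Stilde : Set X) (hS : Convex ℝ S)
    (hcl : closure S = Stilde)
    (V : Submodule ℝ X) (hSV : S ⊆ (V : Set X)) (hVdense : Dense (V : Set X))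
    (hVcont : ∀ f : V →ₗ[ℝ] ℝ,
      Bornology.IsBounded (f '' (((↑) : V → X) ⁻¹' S)) → Continuous f)
    (N : ℕ) (s : Fin N → X) (hs : ∀ i, s i ∈ S)
    (p : Fin N → ℝ) (hp : ∀ i, 0 < p i)
    (ρ : ℝ) (hρ : ∀ i, p i ≤ ρ)
    (t : Fin N → X) (htS : ∀ i, t i ∈ Stilde)
    (sref : X) (hsref : sref ∈ Stilde)
    (hfam : ∀ i, (p i / ρ) • s i + (1 - p i / ρ) • t i = sref) :
    ∀ e : Fin N → X → ℝ, IsObservableOn S e → (∑ i, p i * e i (s i)) ≤ ρ := by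
  rintro e ⟨heff, hsum⟩
  choose φ c hφ using fun i => (heff i).1.exists_continuousLinearMap_add_const hS
    ((Metric.isBounded_Icc 0 1).subset (Set.image_subset_iff.2 (heff i).2)) hSV hVdense hVcont
  let E : X → Fin N → ℝ := fun x i => φ i x + c i
  have hE : Set.MapsTo E Stilde (stdSimplex ℝ (Fin N)) := by
    rw [← hcl]
    refine Set.MapsTo.closure_left (fun x hx => ⟨fun i => ?_, ?_⟩) (by fun_prop)
      (isClosed_stdSimplex ℝ (Fin N))
    · simpa only [E, ← hφ i x hx] using ((heff i).2 x hx).1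
    · simpa only [E, ← hφ _ x hx] using hsum x hx
  have hsplit : ∀ i, ρ * E sref i = p i * e i (s i) + (ρ - p i) * E (t i) i := by
    intro i
    have hρ0 : ρ ≠ 0 := ((hp i).trans_le (hρ i)).ne'
    simp only [E, ← hfam i, hφ i _ (hs i), map_add, map_smul, smul_eq_mul]
    field_simp
    ring
  calc ∑ i, p i * e i (s i)
      ≤ ∑ i, ρ * E sref i := sum_le_sum fun i _ => by
        rw [hsplit i]
        linarith [mul_nonneg (sub_nonneg.2 (hρ i)) ((hE (htS i)).1 i)]
    _ = ρ := by rw [← mul_sum, (hE hsref).2, mul_one]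

/-- Weak Helstrom family bound: if there are `ρ ≥ max p i`, conjugate states `t i` and a
reference state `sref` in `S̃` with `(p i / ρ) • s i + (1 − p i / ρ) • t i = sref`, then
every observable's success probability (hence the optimal one) is at most `ρ`. -/
theorem weak_helstrom_bound {X : Type*} [AddCommGroup X] [Module ℝ X]
    [TopologicalSpace X] [IsTopologicalAddGroup X] [ContinuousSMul ℝ X]
    [LocallyConvexSpace ℝ X] [T2Space X]
    (S Stilde : Set X) (hS : Convex ℝ S) (hSt : Convex ℝ Stilde)
    (hcomp : IsCompact Stilde) (hcl : closure S = Stilde)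
    (V : Submodule ℝ X) (hSV : S ⊆ (V : Set X)) (hVdense : Dense (V : Set X))
    (hVcont : ∀ f : V →ₗ[ℝ] ℝ,
      Bornology.IsBounded (f '' (((↑) : V → X) ⁻¹' S)) → Continuous f)
    (N : ℕ) (s : Fin N → X) (hs : ∀ i, s i ∈ S)
    (p : Fin N → ℝ) (hp : ∀ i, 0 < p i) (hp1 : (∑ i, p i) = 1)
    (ρ : ℝ) (hρ : ∀ i, p i ≤ ρ)
    (t : Fin N → X) (htS : ∀ i, t i ∈ Stilde)
    (sref : X) (hsref : sref ∈ Stilde)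
    (hfam : ∀ i, (p i / ρ) • s i + (1 - p i / ρ) • t i = sref) :
    ∀ e : Fin N → X → ℝ, IsObservableOn S e → (∑ i, p i * e i (s i)) ≤ ρ :=
  weak_helstrom_bound_general S Stilde hS hcl V hSV hVdense hVcont N s hs p hp ρ hρ t htS sref hsref
    hfam
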